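/- Let L = ⊕_{n∈Z} L_n be a weakly Z-graded Lie algebra over a field K of characteristic 0 (homogeneous components possibly infinite-dimensional) such that U(L) is left Noetherian. Then L_n is finite-dimensional for every n ≠ 0. -/

import Mathlib

/-- `comp` is a weak `ℤ`-grading of the Lie algebra `L`: `L = ⊕ₙ Lₙ` with
`⁅Lₙ, Lₘ⁆ ⊆ L_{n+m}`, with no finiteness assumption on the components. -/
def IsWeakZGradedLie (K L : Type*) [Field K] [LieRing L] [LieAlgebra K L]
    (comp : ℤ → Submodule K L) : Prop :=
  DirectSum.IsInternal comp ∧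
    ∀ n m : ℤ, ∀ x ∈ comp n, ∀ y ∈ comp m, ⁅x, y⁆ ∈ comp (n + m)

/-!
If `Lₙ` (`n ≠ 0`) were infinite-dimensional, pick linearly independent `x₀, x₁, … ∈ Lₙ`. The
left ideals `U(L)·{xⱼ : j < k}` increase with `k`, so since `U(L)` is left Noetherian some
`xₖ` lies in `U(L)·{xⱼ : j < k}`. Now `P = span {xⱼ : j < k} ⊕ ⨁_{m ≥ 2} L_{mn}` is a Lie
subalgebra with `P ∩ Lₙ = span {xⱼ : j < k}`, and `U(L)·P ∩ L = P` for every Lie subalgebra `P`;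
so `xₖ ∈ span {xⱼ : j < k}`, a contradiction.

The fact `U(L)·P ∩ L = P` is the relative Poincaré–Birkhoff–Witt theorem. With a complement `q`
of `P` and an ordered basis `(eᵢ)` of `q`, the induced module `U(L) ⊗_{U(P)} K` is built on the
free module over the multisets of indices (the ordered monomials in the `eᵢ`), defining the action
degree by degree as in the classical proof of PBW and checking the Lie module law by induction on
the degree. There `P` kills the monomial `1`, while `z · 1 ≠ 0` for `z ∉ P`.
-/

namespace Finsupp

variable {α M R : Type*} [Semiring R] [AddCommMonoid M] [Module R M]

def filterLinearMap (P : α → Prop) [DecidablePred P] : (α →₀ M) →ₗ[R] α →₀ M where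
  toFun := filter P
  map_add' _ _ := filter_add
  map_smul' _ _ := filter_smul

@[simp] lemma filterLinearMap_apply (P : α → Prop) [DecidablePred P] (f : α →₀ M) :
    filterLinearMap (R := R) P f = f.filter P := rfl

end Finsupp

noncomputable section

namespace InducedModule

open Finsupp

variable {K : Type*} [CommRing K] {ι : Type*}

-- The monomial `μ` stands for `(∏_{i ∈ μ} eᵢ) ⊗ 1` in `U(L) ⊗_{U(p)} K`.
local notation "𝕄" => Multiset ι →₀ K

def monomial (μ : Multiset ι) : 𝕄 := single μ 1

def degLE (r : ℕ) : Submodule K 𝕄 := supported K K {μ | Multiset.card μ ≤ r}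

lemma degLE_eq_span (r : ℕ) :
    degLE (K := K) (ι := ι) r = Submodule.span K (monomial '' {μ | Multiset.card μ ≤ r}) :=
  supported_eq_span_single K _

lemma monomial_mem_degLE {r : ℕ} {μ : Multiset ι} (h : Multiset.card μ ≤ r) :
    monomial μ ∈ degLE (K := K) r :=
  single_mem_supported K 1 h

lemma degLE_mono {r s : ℕ} (h : r ≤ s) : degLE (K := K) (ι := ι) r ≤ degLE s :=
  supported_mono fun _ hμ => le_trans hμ h

def truncLE (r : ℕ) : 𝕄 →ₗ[K] 𝕄 :=
  filterLinearMap fun μ : Multiset ι => Multiset.card μ ≤ r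

def truncGT (r : ℕ) : 𝕄 →ₗ[K] 𝕄 :=
  filterLinearMap fun μ : Multiset ι => ¬ Multiset.card μ ≤ r

lemma truncLE_add_truncGT (r : ℕ) (v : 𝕄) : truncLE r v + truncGT r v = v :=
  filter_add_filter_not v _

lemma truncLE_mem_degLE (r : ℕ) (v : 𝕄) : truncLE r v ∈ degLE r := by
  intro μ hμ
  simp only [truncLE, filterLinearMap_apply, Finset.mem_coe, support_filter,
    Finset.mem_filter] at hμ
  exact hμ.2

lemma truncLE_of_mem_degLE {r : ℕ} {v : 𝕄} (hv : v ∈ degLE r) : truncLE r v = v :=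
  (filter_eq_self_iff _ _).2 fun _ hμ => hv (mem_support_iff.2 hμ)

lemma truncLE_monomial_of_card_gt {r : ℕ} {μ : Multiset ι} (h : r < Multiset.card μ) :
    truncLE r (monomial μ : 𝕄) = 0 :=
  filter_single_of_neg _ (by omega)

lemma truncGT_monomial_of_card_gt {r : ℕ} {μ : Multiset ι} (h : r < Multiset.card μ) :
    truncGT r (monomial μ : 𝕄) = monomial μ :=
  filter_single_of_pos _ (by omega)

lemma truncGT_of_mem_degLE {r : ℕ} {v : 𝕄} (hv : v ∈ degLE r) : truncGT r v = 0 := by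
  have := truncLE_add_truncGT r v
  rwa [truncLE_of_mem_degLE hv, add_eq_left] at this

def consMap (j : ι) : 𝕄 →ₗ[K] 𝕄 := lmapDomain K K (j ::ₘ ·)

lemma consMap_monomial (j : ι) (μ : Multiset ι) :
    consMap j (monomial μ) = (monomial (j ::ₘ μ) : 𝕄) := by
  simp [consMap, monomial]

lemma eq_of_mem_degLE {N : Type*} [AddCommMonoid N] [Module K N] {f g : 𝕄 →ₗ[K] N} {r : ℕ}
    (h : ∀ μ : Multiset ι, Multiset.card μ ≤ r → f (monomial μ) = g (monomial μ))
    {v : 𝕄} (hv : v ∈ degLE r) : f v = g v := by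
  rw [degLE_eq_span] at hv
  exact LinearMap.eqOn_span (by rintro _ ⟨μ, hμ, rfl⟩; exact h μ hμ) hv

lemma map_mem_of_mem_degLE {N : Type*} [AddCommMonoid N] [Module K N] {f : 𝕄 →ₗ[K] N}
    {S : Submodule K N} {r : ℕ}
    (h : ∀ μ : Multiset ι, Multiset.card μ ≤ r → f (monomial μ) ∈ S)
    {v : 𝕄} (hv : v ∈ degLE r) : f v ∈ S := by
  rw [degLE_eq_span] at hv
  refine (Submodule.span_le (p := S.comap f)).2 ?_ hv
  rintro _ ⟨μ, hμ, rfl⟩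
  exact h μ hμ

variable {L : Type*} [LieRing L] [LieAlgebra K L]
variable (p q : Submodule K L) (hpq : IsCompl p q) (c : Module.Basis ι K q)

def coord : L →ₗ[K] ι →₀ K := c.repr.toLinearMap ∘ₗ q.projectionOnto p hpq.symm

def ofCoord : (ι →₀ K) →ₗ[K] L := linearCombination K fun i => (c i : L)

variable {p q hpq c}

@[simp] lemma coord_basis (i : ι) : coord p q hpq c (c i) = single i 1 := by
  simp [coord, Submodule.projectionOnto_apply_left]

lemma coord_eq_zero_of_mem {a : L} (ha : a ∈ p) : coord p q hpq c a = 0 := by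
  simp [coord, Submodule.projectionOnto_apply_of_mem_right hpq.symm ha]

@[simp] lemma ofCoord_single (i : ι) (a : K) : ofCoord q c (single i a) = a • (c i : L) := by
  simp [ofCoord]

lemma ofCoord_repr (w : q) : ofCoord q c (c.repr w) = w := by
  rw [ofCoord, show (fun i => (c i : L)) = q.subtype ∘ c from rfl, ← apply_linearCombination,
    c.linearCombination_repr, Submodule.subtype_apply]

@[simp] lemma coord_ofCoord (u : ι →₀ K) : coord p q hpq c (ofCoord q c u) = u := by
  induction u using Finsupp.induction_linear with
  | zero => simp
  | add u v hu hv => simp [hu, hv]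
  | single i a => simp

lemma sub_ofCoord_coord_mem (z : L) : z - ofCoord q c (coord p q hpq c z) ∈ p := by
  rw [coord, LinearMap.comp_apply, LinearEquiv.coe_coe, ofCoord_repr,
    Submodule.coe_projectionOnto_apply]
  nth_rewrite 1 [← Submodule.projection_add_projection_eq_self hpq z]
  rw [add_sub_cancel_right, ← Submodule.coe_projectionOnto_apply]
  exact Submodule.coe_mem _

variable (p q hpq c) in
def leading (μ : Multiset ι) : L →ₗ[K] 𝕄 :=
  lmapDomain K K (· ::ₘ μ) ∘ₗ coord p q hpq c

@[simp] lemma leading_basis (μ : Multiset ι) (i : ι) :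
    leading p q hpq c μ (c i) = monomial (i ::ₘ μ) := by
  simp [leading, monomial]

lemma consMap_leading (j : ι) (μ : Multiset ι) (z : L) :
    consMap j (leading p q hpq c μ z) = leading p q hpq c (j ::ₘ μ) z := by
  simp only [consMap, leading, LinearMap.comp_apply, lmapDomain_apply, ← mapDomain_comp]
  congr 1
  funext l
  exact Multiset.cons_swap j l μ

lemma leading_mem_span (μ : Multiset ι) {s : Set ι} {z : L}
    (hz : coord p q hpq c z ∈ supported K K s) :
    leading p q hpq c μ z ∈ Submodule.span K ((fun l => monomial (l ::ₘ μ)) '' s) := by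
  rw [supported_eq_span_single] at hz
  have := Submodule.mem_map_of_mem (f := lmapDomain K K (· ::ₘ μ)) hz
  rw [Submodule.map_span, ← Set.image_comp] at this
  convert this using 3
  · ext l : 1
    simp [monomial]
  · rfl

lemma leading_apply_of_card_ne {μ ν : Multiset ι} (h : Multiset.card ν ≠ Multiset.card μ + 1)
    (z : L) : leading p q hpq c μ z ν = 0 :=
  mapDomain_of_notMem_range _ _ (by rintro ⟨l, rfl⟩; simp at h)

lemma leading_mem_degLE (μ : Multiset ι) (z : L) :
    leading p q hpq c μ z ∈ degLE (Multiset.card μ + 1) :=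
  (mem_supported' K _).2 fun _ hν => leading_apply_of_card_ne (by simp at hν; omega) z

lemma truncLE_leading (μ : Multiset ι) (z : L) :
    truncLE (Multiset.card μ) (leading p q hpq c μ z) = 0 :=
  (filter_eq_zero_iff _ _).2 fun _ hν => leading_apply_of_card_ne (by omega) z

lemma truncGT_leading (μ : Multiset ι) (z : L) :
    truncGT (Multiset.card μ) (leading p q hpq c μ z) = leading p q hpq c μ z := by
  have := truncLE_add_truncGT (Multiset.card μ) (leading p q hpq c μ z)
  rwa [truncLE_leading, zero_add] at this

variable [LinearOrder ι]

def minElt (μ : Multiset ι) (h : μ ≠ 0) : ι :=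
  μ.toFinset.min' (Multiset.toFinset_nonempty.2 h)

lemma exists_eq_cons_of_ne_zero {μ : Multiset ι} (h : μ ≠ 0) :
    ∃ i μ', μ = i ::ₘ μ' ∧ ∀ l ∈ μ', i ≤ l := by
  have hmem : minElt μ h ∈ μ := Multiset.mem_toFinset.1 (Finset.min'_mem _ _)
  refine ⟨minElt μ h, μ.erase (minElt μ h), (Multiset.cons_erase hmem).symm, fun l hl => ?_⟩
  exact Finset.min'_le _ _ (Multiset.mem_toFinset.2 (Multiset.mem_of_mem_erase hl))

lemma minElt_cons {i : ι} {μ : Multiset ι} (hi : ∀ l ∈ μ, i ≤ l) (h : i ::ₘ μ ≠ 0) :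
    minElt (i ::ₘ μ) h = i :=
  le_antisymm (Finset.min'_le _ _ (by simp))
    (Finset.le_min' _ _ _ (by simpa using fun l hl => hi l hl))

variable (p q hpq c)

def lowerPart (j : ι) : L →ₗ[K] L :=
  ofCoord q c ∘ₗ filterLinearMap (· ≤ j) ∘ₗ coord p q hpq c

-- This also carries the `p`-component of `z`.
def upperPart (j : ι) : L →ₗ[K] L := LinearMap.id - lowerPart p q hpq c j

/- `actLE r` is the action on monomials of degree `≤ r`. On `j ::ₘ μ` with `j` minimal, the part
of `z` along `eᵢ`, `i ≤ j`, acts by multiplication, and the rest `z'` by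
`z' · (eⱼ μ) = eⱼ (z' · μ) + ⁅z', eⱼ⁆ · μ`; here `eⱼ` acts on the degree-`(r + 1)` part of `z' · μ`,
all of whose indices are `≥ j`, by multiplication, and on the rest by `actLE r`. -/
def actLE : ℕ → L →ₗ[K] 𝕄 →ₗ[K] 𝕄
  | 0 => (linearCombination K fun μ => if μ = 0 then leading p q hpq c 0 else 0).flip
  | r + 1 => (linearCombination K fun μ =>
      if h : Multiset.card μ ≤ r then (actLE r).flip (monomial μ)
      else
        let j := minElt μ (by rintro rfl; simp at h)
        let actRest := (actLE r).flip (monomial (μ.erase j))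
        leading p q hpq c μ ∘ₗ lowerPart p q hpq c j
          + (consMap j ∘ₗ truncGT r + actLE r (c j) ∘ₗ truncLE r) ∘ₗ actRest ∘ₗ
              upperPart p q hpq c j
          + actRest ∘ₗ (LieModule.toEnd K L L : L →ₗ[K] Module.End K L).flip (c j) ∘ₗ
              upperPart p q hpq c j).flip

def act : L →ₗ[K] 𝕄 →ₗ[K] 𝕄 :=
  (linearCombination K fun μ => (actLE p q hpq c (Multiset.card μ)).flip (monomial μ)).flip

variable {p q hpq c}

variable (p q hpq c) in
lemma lowerPart_add_upperPart (j : ι) (z : L) :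
    lowerPart p q hpq c j z + upperPart p q hpq c j z = z := by
  simp [upperPart]

lemma coord_lowerPart (j : ι) (z : L) :
    coord p q hpq c (lowerPart p q hpq c j z) = (coord p q hpq c z).filter (· ≤ j) := by
  simp [lowerPart]

lemma coord_upperPart (j : ι) (z : L) :
    coord p q hpq c (upperPart p q hpq c j z) = (coord p q hpq c z).filter (¬ · ≤ j) := by
  rw [upperPart, LinearMap.sub_apply, map_sub, coord_lowerPart, LinearMap.id_apply,
    sub_eq_iff_eq_add', filter_add_filter_not]

variable (p q hpq c) in
lemma coord_upperPart_mem_supported (j : ι) (z : L) :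
    coord p q hpq c (upperPart p q hpq c j z) ∈ supported K K (Set.Ioi j) := by
  rw [coord_upperPart, mem_supported']
  intro l hl
  simp [not_lt.1 hl]

variable (p q hpq c) in
lemma lowerPart_mem_span (j : ι) (z : L) :
    lowerPart p q hpq c j z ∈ Submodule.span K ((fun l => (c l : L)) '' Set.Iic j) := by
  refine (mem_span_image_iff_linearCombination K).2 ⟨_, ?_, rfl⟩
  rw [mem_supported']
  intro l hl
  simp_all

lemma upperPart_eq_self {j : ι} {z : L} (hz : coord p q hpq c z ∈ supported K K (Set.Ioi j)) :
    upperPart p q hpq c j z = z := by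
  have : (coord p q hpq c z).filter (· ≤ j) = 0 :=
    (filter_eq_zero_iff _ _).2 fun l hl => (mem_supported' K _).1 hz l (by simpa using hl)
  simp [upperPart, lowerPart, this]

lemma upperPart_basis_of_le {i j : ι} (h : i ≤ j) : upperPart p q hpq c j (c i) = 0 := by
  simp [upperPart, lowerPart, filter_single_of_pos (p := (· ≤ j)) h]

lemma actLE_succ_monomial_of_le {r : ℕ} {μ : Multiset ι} (h : Multiset.card μ ≤ r) (z : L) :
    actLE p q hpq c (r + 1) z (monomial μ) = actLE p q hpq c r z (monomial μ) := by
  simp [actLE, monomial, h]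

lemma actLE_monomial_eq_act {r : ℕ} {μ : Multiset ι} (h : Multiset.card μ ≤ r) (z : L) :
    actLE p q hpq c r z (monomial μ) = act p q hpq c z (monomial μ) := by
  induction r, h using Nat.le_induction with
  | base => simp [act, monomial]
  | succ r h ih => rw [actLE_succ_monomial_of_le h, ih]

lemma actLE_eq_act {r : ℕ} {v : 𝕄} (hv : v ∈ degLE r) (z : L) :
    actLE p q hpq c r z v = act p q hpq c z v :=
  eq_of_mem_degLE (f := (actLE p q hpq c r z)) (g := act p q hpq c z)
    (fun _ hμ => actLE_monomial_eq_act hμ z) hv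

lemma act_monomial_zero (z : L) : act p q hpq c z (monomial 0) = leading p q hpq c 0 z := by
  simp [act, actLE, monomial]

lemma act_cons_monomial_unfold {i : ι} {μ : Multiset ι} (hi : ∀ l ∈ μ, i ≤ l) (z : L) :
    act p q hpq c z (monomial (i ::ₘ μ)) =
      leading p q hpq c (i ::ₘ μ) (lowerPart p q hpq c i z)
        + consMap i (truncGT (Multiset.card μ)
            (act p q hpq c (upperPart p q hpq c i z) (monomial μ)))
        + act p q hpq c (c i) (truncLE (Multiset.card μ)
            (act p q hpq c (upperPart p q hpq c i z) (monomial μ)))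
        + act p q hpq c ⁅upperPart p q hpq c i z, (c i : L)⁆ (monomial μ) := by
  have hact : act p q hpq c z (monomial (i ::ₘ μ)) =
      actLE p q hpq c (Multiset.card μ + 1) z (monomial (i ::ₘ μ)) := by
    simp [act, monomial]
  have hne : ¬ Multiset.card (i ::ₘ μ) ≤ Multiset.card μ := by simp
  rw [hact, actLE, LinearMap.flip_apply, monomial, linearCombination_single, one_smul,
    dif_neg hne]
  simp only [minElt_cons hi, Multiset.erase_cons_head, LinearMap.add_apply, LinearMap.comp_apply,
    LinearMap.flip_apply, LieHom.coe_toLinearMap, LieModule.toEnd_apply_apply,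
    actLE_monomial_eq_act le_rfl, actLE_eq_act (truncLE_mem_degLE _ _)]
  abel

lemma act_basis_monomial_of_le {i : ι} {μ : Multiset ι} (hi : ∀ l ∈ μ, i ≤ l) :
    act p q hpq c (c i) (monomial μ) = monomial (i ::ₘ μ) := by
  rcases eq_or_ne μ 0 with rfl | hμ
  · simp [act_monomial_zero]
  obtain ⟨j, μ, rfl, hj⟩ := exists_eq_cons_of_ne_zero hμ
  have hup := upperPart_basis_of_le (p := p) (hpq := hpq) (c := c)
    (hi j (Multiset.mem_cons_self j μ))
  have hlow : lowerPart p q hpq c j (c i) = c i := by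
    simpa [hup] using lowerPart_add_upperPart p q hpq c j (c i)
  simp [act_cons_monomial_unfold hj, hup, hlow]

lemma act_mem_degLE_of_forall {s : ℕ}
    (h : ∀ ν : Multiset ι, Multiset.card ν ≤ s → ∀ z : L,
      act p q hpq c z (monomial ν) - leading p q hpq c ν z ∈ degLE (Multiset.card ν))
    {v : 𝕄} (hv : v ∈ degLE s) (z : L) : act p q hpq c z v ∈ degLE (s + 1) := by
  refine map_mem_of_mem_degLE (f := act p q hpq c z) (fun ν hν => ?_) hv
  rw [← sub_add_cancel (act p q hpq c z (monomial ν)) (leading p q hpq c ν z)]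
  exact add_mem (degLE_mono (by omega) (h ν hν z))
    (degLE_mono (by omega) (leading_mem_degLE ν z))

lemma act_monomial_sub_leading_mem (μ : Multiset ι) (z : L) :
    act p q hpq c z (monomial μ) - leading p q hpq c μ z ∈ degLE (Multiset.card μ) := by
  induction hn : Multiset.card μ using Nat.strong_induction_on generalizing μ z with
  | _ n ih =>
  rcases eq_or_ne μ 0 with rfl | hμ
  · simp [act_monomial_zero]
  obtain ⟨j, μ, rfl, hj⟩ := exists_eq_cons_of_ne_zero hμ
  rw [Multiset.card_cons] at hn
  subst hn
  set zb := upperPart p q hpq c j z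
  set E := act p q hpq c zb (monomial μ) - leading p q hpq c μ zb
  have hE : E ∈ degLE (Multiset.card μ) := ih _ (by omega) μ zb rfl
  have hsplit : act p q hpq c zb (monomial μ) = leading p q hpq c μ zb + E := by
    simp [E]
  have hlead : leading p q hpq c (j ::ₘ μ) (lowerPart p q hpq c j z)
      + consMap j (leading p q hpq c μ zb) = leading p q hpq c (j ::ₘ μ) z := by
    rw [consMap_leading, ← map_add, lowerPart_add_upperPart]
  have hdeg {v : 𝕄} (hv : v ∈ degLE (Multiset.card μ)) (w : L) :
      act p q hpq c w v ∈ degLE (Multiset.card μ + 1) :=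
    act_mem_degLE_of_forall (fun ν hν w => ih _ (by omega) ν w rfl) hv w
  have hrest : act p q hpq c (c j) E + act p q hpq c ⁅zb, (c j : L)⁆ (monomial μ)
      ∈ degLE (Multiset.card μ + 1) :=
    add_mem (hdeg hE _) (hdeg (monomial_mem_degLE le_rfl) _)
  convert hrest using 1
  rw [act_cons_monomial_unfold hj, hsplit]
  simp only [map_add, truncGT_leading, truncLE_leading, truncGT_of_mem_degLE hE,
    truncLE_of_mem_degLE hE, add_zero, zero_add, ← hlead]
  abel

lemma act_basis_cons_monomial {i l : ι} {μ : Multiset ι} (hli : l ≤ i)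
    (hi : ∀ x ∈ μ, i ≤ x) :
    act p q hpq c (c i) (monomial (l ::ₘ μ)) =
      monomial (i ::ₘ l ::ₘ μ) + act p q hpq c ⁅(c i : L), (c l : L)⁆ (monomial μ) := by
  have hl : ∀ x ∈ μ, l ≤ x := fun x hx => hli.trans (hi x hx)
  rcases hli.eq_or_lt with rfl | hlt
  · have hup := upperPart_basis_of_le (p := p) (hpq := hpq) (c := c) (le_refl l)
    have hlow : lowerPart p q hpq c l (c l) = c l := by
      simpa [hup] using lowerPart_add_upperPart p q hpq c l (c l)
    simp [act_cons_monomial_unfold hl, hup, hlow]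
  · have hup : upperPart p q hpq c l (c i) = c i :=
      upperPart_eq_self (by simp [single_mem_supported, hlt])
    have hlow : lowerPart p q hpq c l (c i) = 0 := by
      simpa [hup] using lowerPart_add_upperPart p q hpq c l (c i)
    have hcard : Multiset.card μ < Multiset.card (i ::ₘ μ) := by simp
    rw [act_cons_monomial_unfold hl, hlow, hup, act_basis_monomial_of_le hi,
      truncGT_monomial_of_card_gt hcard, truncLE_monomial_of_card_gt hcard, consMap_monomial,
      map_zero, map_zero, zero_add, add_zero, Multiset.cons_swap]

lemma act_basis_leading {i : ι} {μ : Multiset ι} (hi : ∀ x ∈ μ, i ≤ x) {z : L}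
    (hz : coord p q hpq c z ∈ supported K K (Set.Ici i)) :
    act p q hpq c (c i) (leading p q hpq c μ z) = leading p q hpq c (i ::ₘ μ) z := by
  rw [← consMap_leading]
  refine LinearMap.eqOn_span (f := act p q hpq c (c i)) (g := consMap i) ?_
    (leading_mem_span μ hz)
  rintro _ ⟨l, hl, rfl⟩
  rw [act_basis_monomial_of_le (by simpa using ⟨hl, hi⟩), consMap_monomial]

lemma act_cons_monomial_of_upper {i : ι} {μ : Multiset ι} (hi : ∀ x ∈ μ, i ≤ x) {z : L}
    (hz : coord p q hpq c z ∈ supported K K (Set.Ioi i)) :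
    act p q hpq c z (monomial (i ::ₘ μ)) =
      act p q hpq c (c i) (act p q hpq c z (monomial μ))
        + act p q hpq c ⁅z, (c i : L)⁆ (monomial μ) := by
  have hlow : lowerPart p q hpq c i z = 0 := by
    simpa [upperPart_eq_self hz] using lowerPart_add_upperPart p q hpq c i z
  -- The top-degree part of `z · μ` only involves indices `> i`, where `eᵢ` acts by multiplying.
  set E := act p q hpq c z (monomial μ) - leading p q hpq c μ z
  have hE : E ∈ degLE (Multiset.card μ) := act_monomial_sub_leading_mem μ z
  have hsplit : act p q hpq c z (monomial μ) = leading p q hpq c μ z + E := by simp [E]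
  rw [act_cons_monomial_unfold hi, upperPart_eq_self hz, hlow, hsplit]
  simp only [map_add, map_zero, truncGT_leading, truncLE_leading, truncGT_of_mem_degLE hE,
    truncLE_of_mem_degLE hE, consMap_leading,
    ← act_basis_leading hi (supported_mono Set.Ioi_subset_Ici_self hz)]
  abel

lemma act_cons_monomial_of_mem_span {i : ι} {μ : Multiset ι} (hi : ∀ x ∈ μ, i ≤ x) {z : L}
    (hz : z ∈ Submodule.span K ((fun l => (c l : L)) '' Set.Iic i)) :
    act p q hpq c z (monomial (i ::ₘ μ)) =
      act p q hpq c (c i) (act p q hpq c z (monomial μ))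
        + act p q hpq c ⁅z, (c i : L)⁆ (monomial μ) := by
  induction hz using Submodule.span_induction with
  | mem _ h =>
    obtain ⟨l, hl, rfl⟩ := h
    have hl' : ∀ x ∈ μ, l ≤ x := fun x hx => le_trans hl (hi x hx)
    dsimp only
    rw [act_basis_monomial_of_le (by simpa using ⟨hl, hl'⟩), act_basis_monomial_of_le hl',
      act_basis_cons_monomial hl hi, Multiset.cons_swap, ← lie_skew, map_neg,
      LinearMap.neg_apply, neg_add_cancel_right]
  | zero => simp
  | add x y _ _ hx hy =>
    simp only [map_add, add_lie, LinearMap.add_apply, hx, hy]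
    abel
  | smul a x _ hx => simp only [map_smul, smul_lie, LinearMap.smul_apply, hx, smul_add]

lemma act_cons_monomial {i : ι} {μ : Multiset ι} (hi : ∀ x ∈ μ, i ≤ x) (z : L) :
    act p q hpq c z (monomial (i ::ₘ μ)) =
      act p q hpq c (c i) (act p q hpq c z (monomial μ))
        + act p q hpq c ⁅z, (c i : L)⁆ (monomial μ) := by
  have hlow := act_cons_monomial_of_mem_span (hpq := hpq) hi (lowerPart_mem_span p q hpq c i z)
  have hup := act_cons_monomial_of_upper hi (coord_upperPart_mem_supported p q hpq c i z)
  rw [← lowerPart_add_upperPart p q hpq c i z]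
  simp only [map_add, add_lie, LinearMap.add_apply, hlow, hup]
  abel

variable (p q hpq c) in
def defect : L →ₗ[K] L →ₗ[K] Module.End K 𝕄 :=
  LinearMap.mk₂ K
    (fun z w => act p q hpq c z * act p q hpq c w - act p q hpq c w * act p q hpq c z
      - act p q hpq c ⁅z, w⁆)
    (fun _ _ _ => by simp only [map_add, add_lie, add_mul, mul_add]; abel)
    (fun _ _ _ => by simp only [map_smul, smul_lie, smul_mul_assoc, mul_smul_comm]; module)
    (fun _ _ _ => by simp only [map_add, lie_add, add_mul, mul_add]; abel)
    (fun _ _ _ => by simp only [map_smul, lie_smul, smul_mul_assoc, mul_smul_comm]; module)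

lemma defect_apply (z w : L) (v : 𝕄) :
    defect p q hpq c z w v = act p q hpq c z (act p q hpq c w v)
      - act p q hpq c w (act p q hpq c z v) - act p q hpq c ⁅z, w⁆ v := rfl

lemma defect_swap (z w : L) : defect p q hpq c w z = -defect p q hpq c z w := by
  refine LinearMap.ext fun v => ?_
  simp only [defect_apply, LinearMap.neg_apply, ← lie_skew z w, map_neg]
  abel

lemma defect_basis_right {i : ι} {μ : Multiset ι} (hi : ∀ x ∈ μ, i ≤ x) (z : L) :
    defect p q hpq c z (c i) (monomial μ) = 0 := by
  rw [defect_apply, act_basis_monomial_of_le hi, act_cons_monomial hi, sub_sub, sub_self]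

lemma defect_basis_leading {i : ι} {μ : Multiset ι} (hi : ∀ x ∈ μ, i ≤ x) {y : L}
    (hy : coord p q hpq c y ∈ supported K K (Set.Ici i)) (z : L) :
    defect p q hpq c z (c i) (leading p q hpq c μ y) = 0 :=
  LinearMap.eqOn_span (f := defect p q hpq c z (c i)) (g := 0)
    (by rintro _ ⟨l, hl, rfl⟩; exact defect_basis_right (by simpa using ⟨hl, hi⟩) z)
    (leading_mem_span μ hy)

lemma defect_eq_zero_of_mem_span {s : Set ι} {z : L} {v : 𝕄}
    (h : ∀ l ∈ s, defect p q hpq c z (c l) v = 0) {w : L}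
    (hw : w ∈ Submodule.span K ((fun l => (c l : L)) '' s)) : defect p q hpq c z w v = 0 :=
  LinearMap.eqOn_span (f := (defect p q hpq c z).flip v) (g := 0)
    (by rintro _ ⟨l, hl, rfl⟩; exact h l hl) hw

lemma act_monomial_zero_of_mem {a : L} (ha : a ∈ p) : act p q hpq c a (monomial 0) = 0 := by
  simp [act_monomial_zero, leading, coord_eq_zero_of_mem ha]

lemma defect_monomial_zero (hp : ∀ a ∈ p, ∀ b ∈ p, ⁅a, b⁆ ∈ p) (z w : L) :
    defect p q hpq c z w (monomial 0) = 0 := by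
  have hq (z w : L) : defect p q hpq c z (ofCoord q c (coord p q hpq c w)) (monomial 0) = 0 :=
    defect_eq_zero_of_mem_span (s := Set.univ) (fun l _ => defect_basis_right (by simp) z)
      ((mem_span_image_iff_linearCombination K).2 ⟨_, by simp, rfl⟩)
  have hpp {a b : L} (ha : a ∈ p) (hb : b ∈ p) : defect p q hpq c a b (monomial 0) = 0 := by
    simp [defect_apply, act_monomial_zero_of_mem ha, act_monomial_zero_of_mem hb,
      act_monomial_zero_of_mem (hp a ha b hb)]
  set wq := ofCoord q c (coord p q hpq c w)
  set zq := ofCoord q c (coord p q hpq c z)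
  have hzq : defect p q hpq c zq (w - wq) (monomial 0) = 0 := by
    rw [defect_swap, LinearMap.neg_apply, hq, neg_zero]
  rw [← sub_add_cancel w wq, map_add, LinearMap.add_apply, hq, add_zero,
    ← sub_add_cancel z zq, map_add, LinearMap.add_apply, LinearMap.add_apply, hzq, add_zero]
  exact hpp (sub_ofCoord_coord_mem z) (sub_ofCoord_coord_mem w)

lemma defect_cons_monomial_of_upper {j : ι} {μ : Multiset ι} (hj : ∀ x ∈ μ, j ≤ x)
    (ih : ∀ v ∈ degLE (Multiset.card μ), ∀ z w : L, defect p q hpq c z w v = 0) {z w : L}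
    (hz : coord p q hpq c z ∈ supported K K (Set.Ioi j))
    (hw : coord p q hpq c w ∈ supported K K (Set.Ioi j)) :
    defect p q hpq c z w (monomial (j ::ₘ μ)) = 0 := by
  have hcomm {y : L} (hy : coord p q hpq c y ∈ supported K K (Set.Ioi j)) (y' : L) :
      defect p q hpq c y' (c j) (act p q hpq c y (monomial μ)) = 0 := by
    rw [← sub_add_cancel (act p q hpq c y (monomial μ)) (leading p q hpq c μ y), map_add,
      ih _ (act_monomial_sub_leading_mem μ y), zero_add]
    exact defect_basis_leading hj (supported_mono Set.Ioi_subset_Ici_self hy) y'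
  have hμ (z w : L) : defect p q hpq c z w (monomial μ) = 0 :=
    ih _ (monomial_mem_degLE le_rfl) z w
  -- After expanding `j ::ₘ μ` by `act_cons_monomial`, the defect is a combination of defects
  -- in degree `card μ` and the Jacobi identity.
  have e1 := hcomm hw z
  have e2 := hcomm hz w
  have e3 := congrArg (act p q hpq c (c j)) (hμ z w)
  have e4 := hμ ⁅z, (c j : L)⁆ w
  have e5 := hμ z ⁅w, (c j : L)⁆
  have hjac : ⁅⁅z, w⁆, (c j : L)⁆ = ⁅⁅z, (c j : L)⁆, w⁆ + ⁅z, ⁅w, (c j : L)⁆⁆ := by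
    rw [lie_lie, ← lie_skew ⁅z, (c j : L)⁆ w]
    abel
  simp only [defect_apply, map_sub, map_zero] at e1 e2 e3 e4 e5 ⊢
  rw [act_cons_monomial hj z, act_cons_monomial hj w, act_cons_monomial hj ⁅z, w⁆, hjac]
  simp only [map_add, LinearMap.add_apply]
  linear_combination (norm := module) e1 - e2 + e3 + e4 + e5

lemma act_monomial_zero_ne_zero {x : L} (hx : x ∉ p) : act p q hpq c x (monomial 0) ≠ 0 := by
  have hcoord : coord p q hpq c x ≠ 0 := fun h0 => hx (by
    simpa [h0] using sub_ofCoord_coord_mem (p := p) (hpq := hpq) (c := c) x)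
  rw [act_monomial_zero, leading, LinearMap.comp_apply, lmapDomain_apply]
  exact fun h0 => hcoord (mapDomain_injective (fun a b h => by simpa using h) (h0.trans
    mapDomain_zero.symm))

variable (hp : ∀ a ∈ p, ∀ b ∈ p, ⁅a, b⁆ ∈ p)
include hp

lemma defect_monomial_eq_zero (μ : Multiset ι) (z w : L) :
    defect p q hpq c z w (monomial μ) = 0 := by
  induction hn : Multiset.card μ using Nat.strong_induction_on generalizing μ z w with
  | _ n ih =>
  rcases eq_or_ne μ 0 with rfl | hμ
  · exact defect_monomial_zero hp z w
  obtain ⟨j, μ, rfl, hj⟩ := exists_eq_cons_of_ne_zero hμ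
  rw [Multiset.card_cons] at hn
  have ih' (v : 𝕄) (hv : v ∈ degLE (Multiset.card μ)) (z w : L) :
      defect p q hpq c z w v = 0 :=
    eq_of_mem_degLE (f := defect p q hpq c z w) (g := 0)
      (fun ν hν => ih _ (by omega) ν z w rfl) hv
  have hlower (z w : L) :
      defect p q hpq c z (lowerPart p q hpq c j w) (monomial (j ::ₘ μ)) = 0 :=
    defect_eq_zero_of_mem_span (fun l hl => defect_basis_right
      (by simpa using ⟨hl, fun x hx => le_trans hl (hj x hx)⟩) z)
      (lowerPart_mem_span p q hpq c j w)
  have hlower' : defect p q hpq c (lowerPart p q hpq c j z) (upperPart p q hpq c j w)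
      (monomial (j ::ₘ μ)) = 0 := by
    rw [defect_swap, LinearMap.neg_apply, hlower, neg_zero]
  rw [← lowerPart_add_upperPart p q hpq c j w, map_add, LinearMap.add_apply, hlower, zero_add,
    ← lowerPart_add_upperPart p q hpq c j z, map_add, LinearMap.add_apply, LinearMap.add_apply,
    hlower', zero_add]
  exact defect_cons_monomial_of_upper hj ih' (coord_upperPart_mem_supported p q hpq c j z)
    (coord_upperPart_mem_supported p q hpq c j w)

lemma act_lie (z w : L) :
    act p q hpq c ⁅z, w⁆ =
      act p q hpq c z * act p q hpq c w - act p q hpq c w * act p q hpq c z := by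
  have h : defect p q hpq c z w = 0 := Finsupp.lhom_ext fun μ a => by
    rw [← smul_single_one, map_smul, LinearMap.zero_apply]
    exact (congrArg (a • ·) (defect_monomial_eq_zero hp μ z w)).trans (smul_zero a)
  exact (sub_eq_zero.1 h).symm

attribute [local instance] LieRing.ofAssociativeRing

variable (p q hpq c) in
def actHom : L →ₗ⁅K⁆ Module.End K 𝕄 :=
  { act p q hpq c with
    map_lie' := fun {z w} => by
      rw [Ring.lie_def]
      exact act_lie hp z w }

end InducedModule

attribute [local instance] LieRing.ofAssociativeRing

open UniversalEnvelopingAlgebra in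
theorem LieSubalgebra.mem_of_ι_mem_span {K L : Type*} [Field K] [LieRing L] [LieAlgebra K L]
    (P : LieSubalgebra K L) {x : L}
    (hx : ι K x ∈ Submodule.span (UniversalEnvelopingAlgebra K L) (ι K '' (P : Set L))) :
    x ∈ P := by
  obtain ⟨q, hq⟩ := Submodule.exists_isCompl P.toSubmodule
  let c := Module.Basis.ofVectorSpace K q
  let _ : LinearOrder (Module.Basis.ofVectorSpaceIndex K q) :=
    IsWellOrder.linearOrder WellOrderingRel
  have hP : ∀ a ∈ P.toSubmodule, ∀ b ∈ P.toSubmodule, ⁅a, b⁆ ∈ P.toSubmodule :=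
    fun _ ha _ hb => P.lie_mem ha hb
  set Φ := lift K (InducedModule.actHom P.toSubmodule q hq c hP)
  have hΦ (a : L) : Φ (ι K a) = InducedModule.act P.toSubmodule q hq c a := lift_ι_apply K _ a
  have hann (u : UniversalEnvelopingAlgebra K L)
      (hu : u ∈ Submodule.span (UniversalEnvelopingAlgebra K L) (ι K '' (P : Set L))) :
      Φ u (InducedModule.monomial 0) = 0 := by
    induction hu using Submodule.span_induction with
    | mem u hu =>
      obtain ⟨a, ha, rfl⟩ := hu
      rw [hΦ]
      exact InducedModule.act_monomial_zero_of_mem ha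
    | zero => simp
    | add u v _ _ hu hv => rw [map_add, LinearMap.add_apply, hu, hv, add_zero]
    | smul r u _ hu => rw [smul_eq_mul, map_mul, Module.End.mul_apply, hu, map_zero]
  by_contra hxP
  exact InducedModule.act_monomial_zero_ne_zero hxP ((hΦ x).symm ▸ hann _ hx)

end

section Grading

variable {K L : Type*} [Field K] [LieRing L] [LieAlgebra K L] {comp : ℤ → Submodule K L}

lemma IsWeakZGradedLie.lie_mem_iSup (hgr : IsWeakZGradedLie K L comp) {S T U : Set ℤ}
    (hSTU : ∀ s ∈ S, ∀ t ∈ T, s + t ∈ U) {x y : L} (hx : x ∈ ⨆ s : S, comp s)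
    (hy : y ∈ ⨆ t : T, comp t) : ⁅x, y⁆ ∈ ⨆ u : U, comp u := by
  induction hx using Submodule.iSup_induction' generalizing y with
  | mem s x hx =>
    induction hy using Submodule.iSup_induction' with
    | mem t y hy =>
      exact Submodule.mem_iSup_of_mem (⟨s + t, hSTU s s.2 t t.2⟩ : U) (hgr.2 s t x hx y hy)
    | zero => simp
    | add y y' _ _ h h' => rw [lie_add]; exact add_mem h h'
  | zero => simp
  | add x x' _ _ h h' => rw [add_lie]; exact add_mem (h hy) (h' hy)

lemma IsWeakZGradedLie.exists_lieSubalgebra (hgr : IsWeakZGradedLie K L comp) {n : ℤ}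
    (hn : n ≠ 0) {V : Submodule K L} (hV : V ≤ comp n) :
    ∃ P : LieSubalgebra K L, V ≤ P.toSubmodule ∧ ∀ x ∈ comp n, x ∈ P → x ∈ V := by
  set A : Set ℤ := {m | ∃ j : ℤ, 2 ≤ j ∧ m = j * n}
  set B := ⨆ m : A, comp m
  have hVB : V ⊔ B ≤ ⨆ m : {m : ℤ | ∃ j : ℤ, 1 ≤ j ∧ m = j * n}, comp m := by
    refine sup_le (hV.trans (le_iSup_of_le ⟨n, 1, le_rfl, (one_mul n).symm⟩ le_rfl)) ?_
    exact iSup_le fun ⟨m, j, hj, hm⟩ => le_iSup_of_le ⟨m, j, by omega, hm⟩ le_rfl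
  have hdisj : Disjoint (comp n) B := by
    have h := hgr.1.submodule_iSupIndep.disjoint_biSup (y := A) (x := n) (by
      rintro ⟨j, hj, hjn⟩
      have : (j - 1) * n = 0 := by linarith
      rcases mul_eq_zero.1 this with h | h <;> omega)
    rwa [iSup_subtype'] at h
  refine ⟨{ toSubmodule := V ⊔ B, lie_mem' := fun {x y} hx hy => ?_ }, le_sup_left, ?_⟩
  · refine Submodule.mem_sup_right (hgr.lie_mem_iSup ?_ (hVB hx) (hVB hy))
    rintro _ ⟨j, hj, rfl⟩ _ ⟨k, hk, rfl⟩
    exact ⟨j + k, by omega, by ring⟩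
  · intro x hx hxP
    obtain ⟨v, hv, b, hb, rfl⟩ := Submodule.mem_sup.1 hxP
    have hb' : b ∈ comp n := by simpa using sub_mem hx (hV hv)
    have : b = 0 := (Submodule.disjoint_def.1 hdisj) b hb' hb
    simpa [this] using hv

end Grading

lemma exists_linearIndependent_nat_of_not_finiteDimensional {K V : Type*} [DivisionRing K]
    [AddCommGroup V] [Module K V] (h : ¬ FiniteDimensional K V) :
    ∃ x : ℕ → V, LinearIndependent K x := by
  let b := Module.Basis.ofVectorSpace K V
  have : Infinite (Module.Basis.ofVectorSpaceIndex K V) :=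
    not_finite_iff_infinite.1 fun _ => h (Module.Finite.of_basis b)
  exact ⟨b ∘ Infinite.natEmbedding _,
    b.linearIndependent.comp _ (Infinite.natEmbedding _).injective⟩

open UniversalEnvelopingAlgebra in
lemma exists_ι_mem_span_of_isNoetherianRing {K L : Type*} [CommRing K] [LieRing L]
    [LieAlgebra K L] [IsNoetherianRing (UniversalEnvelopingAlgebra K L)] (x : ℕ → L) :
    ∃ k, ι K (x k) ∈
      Submodule.span (UniversalEnvelopingAlgebra K L) (ι K '' (x '' Set.Iio k)) := by
  let J : ℕ →o Submodule (UniversalEnvelopingAlgebra K L) (UniversalEnvelopingAlgebra K L) :=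
    ⟨fun k => Submodule.span _ (ι K '' (x '' Set.Iio k)), fun _ _ hkl =>
      Submodule.span_mono (Set.image_mono (Set.image_mono (Set.Iio_subset_Iio hkl)))⟩
  obtain ⟨k, hk⟩ := monotone_stabilizes_iff_noetherian.2 inferInstance J
  have hmem : ι K (x k) ∈ J (k + 1) :=
    Submodule.subset_span ⟨x k, ⟨k, by simp, rfl⟩, rfl⟩
  rw [← hk (k + 1) k.le_succ] at hmem
  exact ⟨k, hmem⟩

theorem weakGraded_components_finiteDimensional_general
    (K : Type*) [Field K]
    (L : Type*) [LieRing L] [LieAlgebra K L]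
    (comp : ℤ → Submodule K L) (hgr : IsWeakZGradedLie K L comp)
    (hNoeth : IsNoetherianRing (UniversalEnvelopingAlgebra K L)) :
    ∀ n : ℤ, n ≠ 0 → FiniteDimensional K (comp n) := by
  intro n hn
  by_contra hfin
  obtain ⟨x, hx⟩ := exists_linearIndependent_nat_of_not_finiteDimensional hfin
  obtain ⟨k, hk⟩ := exists_ι_mem_span_of_isNoetherianRing (K := K) fun j => (x j : L)
  obtain ⟨P, hVP, hPV⟩ := hgr.exists_lieSubalgebra hn
    (V := Submodule.span K ((fun j => (x j : L)) '' Set.Iio k))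
    (Submodule.span_le.2 (by rintro _ ⟨j, _, rfl⟩; exact (x j).2))
  have hxk : (x k : L) ∈ P := P.mem_of_ι_mem_span (Submodule.span_mono
    (Set.image_mono fun _ hy => hVP (Submodule.subset_span hy)) hk)
  exact (hx.map' (comp n).subtype (comp n).ker_subtype).notMem_span_image
    (s := Set.Iio k) (lt_irrefl k) (hPV _ (x k).2 hxk)

/-- Let `L` be a weakly `ℤ`-graded Lie algebra over a field of characteristic zero
such that `U(L)` is left Noetherian.  Then `Lₙ` is finite-dimensional for every
`n ≠ 0`. -/
theorem weakGraded_components_finiteDimensional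
    (K : Type*) [Field K] [CharZero K]
    (L : Type*) [LieRing L] [LieAlgebra K L]
    (comp : ℤ → Submodule K L) (hgr : IsWeakZGradedLie K L comp)
    (hNoeth : IsNoetherianRing (UniversalEnvelopingAlgebra K L)) :
    ∀ n : ℤ, n ≠ 0 → FiniteDimensional K (comp n) :=
  weakGraded_components_finiteDimensional_general K L comp hgr hNoeth
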